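/- For x > 0 and ν < 1, x^ν e^{−x}/(x + 1 − ν) < Γ(ν, x) < x^{ν−3} e^{−x} (x² + (ν−1)x + (ν−1)(ν−2)). -/

import Mathlib

noncomputable def incGamma (ν x : ℝ) : ℝ := ∫ t in Set.Ioi x, t ^ (ν - 1) * Real.exp (-t)

/-!
Both bounds compare the integrand `f t = t ^ (ν - 1) * exp (-t)` with `-F'` for an explicit `F`
vanishing at infinity, so that `Γ(ν, x) - F x = ∫_x^∞ (f + F')` has a definite sign.
For `F t = t ^ ν * exp (-t) / (t + 1 - ν)` one finds `f + F' = (1 - ν) f / (t + 1 - ν) ^ 2 > 0`.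
For `G t = exp (-t) * (t ^ (ν - 1) + (ν - 1) t ^ (ν - 2) + (ν - 1) (ν - 2) t ^ (ν - 3))`, the first
three terms of the asymptotic expansion of `Γ(ν, t)`, the sum telescopes to
`f + G' = (ν - 1) (ν - 2) (ν - 3) t ^ (ν - 4) exp (-t)`, which is negative for `ν < 1`.
-/

open MeasureTheory Real Set Filter Topology

lemma setIntegral_pos_of_forall_pos {X : Type*} [MeasurableSpace X] {μ : Measure X} {s : Set X}
    {f : X → ℝ} (hs : MeasurableSet s) (hμs : μ s ≠ 0) (hf : IntegrableOn f s μ)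
    (hpos : ∀ t ∈ s, 0 < f t) : 0 < ∫ t in s, f t ∂μ := by
  have hsupp : Function.support f ∩ s = s :=
    inter_eq_right.mpr fun t ht => (hpos t ht).ne'
  rw [setIntegral_pos_iff_support_of_nonneg_ae
    (ae_restrict_of_forall_mem hs fun t ht => (hpos t ht).le) hf, hsupp]
  exact pos_iff_ne_zero.mpr hμs

lemma lt_integral_Ioi_of_hasDerivAt {f F F' : ℝ → ℝ} {a : ℝ}
    (hderiv : ∀ t ∈ Ici a, HasDerivAt F (F' t) t) (hF' : IntegrableOn F' (Ioi a))
    (hlim : Tendsto F atTop (𝓝 0)) (hf : IntegrableOn f (Ioi a))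
    (hpos : ∀ t ∈ Ioi a, 0 < f t + F' t) : F a < ∫ t in Ioi a, f t := by
  have hFTC : ∫ t in Ioi a, F' t = 0 - F a :=
    integral_Ioi_of_hasDerivAt_of_tendsto' hderiv hF' hlim
  have hsum : 0 < ∫ t in Ioi a, (f t + F' t) :=
    setIntegral_pos_of_forall_pos measurableSet_Ioi (by simp) (hf.add hF') hpos
  rw [integral_add hf hF', hFTC] at hsum
  linarith

lemma integral_Ioi_lt_of_hasDerivAt {f F F' : ℝ → ℝ} {a : ℝ}
    (hderiv : ∀ t ∈ Ici a, HasDerivAt F (F' t) t) (hF' : IntegrableOn F' (Ioi a))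
    (hlim : Tendsto F atTop (𝓝 0)) (hf : IntegrableOn f (Ioi a))
    (hneg : ∀ t ∈ Ioi a, f t + F' t < 0) : ∫ t in Ioi a, f t < F a := by
  have := lt_integral_Ioi_of_hasDerivAt (f := fun t => -f t) (F := fun t => -F t)
    (fun t ht => (hderiv t ht).neg) hF'.neg (by simpa using hlim.neg) hf.neg
    (fun t ht => by linarith [hneg t ht])
  simpa [integral_neg] using this

lemma integrableOn_rpow_mul_exp_neg_Ioi {s x : ℝ} (hs : s ≤ 0) (hx : 0 < x) :
    IntegrableOn (fun t => t ^ s * exp (-t)) (Ioi x) := by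
  have hexp : IntegrableOn (fun t => exp (-t)) (Ioi x) := by
    simpa using exp_neg_integrableOn_Ioi x one_pos
  refine Integrable.mono' (hexp.const_mul (x ^ s)) (by fun_prop) ?_
  filter_upwards [ae_restrict_mem measurableSet_Ioi] with t (ht : x < t)
  have ht0 : 0 < t := hx.trans ht
  rw [norm_of_nonneg (by positivity)]
  exact mul_le_mul_of_nonneg_right (rpow_le_rpow_of_nonpos hx ht.le hs) (exp_pos _).le

lemma tendsto_rpow_mul_exp_neg_atTop_nhds_zero (s : ℝ) :
    Tendsto (fun t : ℝ => t ^ s * exp (-t)) atTop (𝓝 0) := by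
  simpa using tendsto_rpow_mul_exp_neg_mul_atTop_nhds_zero s 1 one_pos

lemma hasDerivAt_exp_neg (t : ℝ) : HasDerivAt (fun u => exp (-u)) (-exp (-t)) t := by
  simpa using (hasDerivAt_neg t).exp

section Lower

variable {ν : ℝ}

noncomputable def incGammaLowerBound (ν t : ℝ) : ℝ := t ^ ν * exp (-t) / (t + 1 - ν)

lemma hasDerivAt_incGammaLowerBound {t : ℝ} (ht : 0 < t) (hne : t + 1 - ν ≠ 0) :
    HasDerivAt (incGammaLowerBound ν)
      ((1 - ν) / (t + 1 - ν) ^ 2 * (t ^ (ν - 1) * exp (-t)) - t ^ (ν - 1) * exp (-t)) t := by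
  have hnum : HasDerivAt (fun u => u ^ ν * exp (-u))
      (ν * t ^ (ν - 1) * exp (-t) + t ^ ν * -exp (-t)) t :=
    (hasDerivAt_rpow_const (Or.inl ht.ne')).mul (hasDerivAt_exp_neg t)
  have hden : HasDerivAt (fun u => u + 1 - ν) 1 t :=
    ((hasDerivAt_id t).add_const 1).sub_const ν
  refine (hnum.div hden hne).congr_deriv ?_
  rw [show t ^ ν = t ^ (ν - 1) * t by rw [rpow_sub_one ht.ne', div_mul_cancel₀ _ ht.ne']]
  field_simp
  ring

lemma tendsto_incGammaLowerBound_atTop : Tendsto (incGammaLowerBound ν) atTop (𝓝 0) := by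
  have hden : Tendsto (fun t : ℝ => (t + 1 - ν)⁻¹) atTop (𝓝 0) :=
    tendsto_inv_atTop_zero.comp (tendsto_atTop_add_const_right _ (1 - ν) tendsto_id
      |>.congr fun t => by simp only [id]; ring)
  have := (tendsto_rpow_mul_exp_neg_atTop_nhds_zero ν).mul hden
  rw [mul_zero] at this
  exact this.congr fun t => (div_eq_mul_inv _ _).symm

lemma incGammaLowerBound_lt_incGamma (hν : ν < 1) {x : ℝ} (hx : 0 < x) :
    incGammaLowerBound ν x < incGamma ν x := by
  have hf := integrableOn_rpow_mul_exp_neg_Ioi (s := ν - 1) (by linarith) hx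
  have hweight : IntegrableOn (fun t => (1 - ν) / (t + 1 - ν) ^ 2 * (t ^ (ν - 1) * exp (-t)))
      (Ioi x) := by
    refine hf.bdd_mul (c := (1 - ν)⁻¹) (Measurable.aestronglyMeasurable (by fun_prop)) ?_
    filter_upwards [ae_restrict_mem measurableSet_Ioi] with t (ht : x < t)
    have h1ν : 0 < 1 - ν := by linarith
    calc ‖(1 - ν) / (t + 1 - ν) ^ 2‖ = (1 - ν) / (t + 1 - ν) ^ 2 :=
          norm_of_nonneg (div_nonneg h1ν.le (sq_nonneg _))
      _ ≤ (1 - ν) / (1 - ν) ^ 2 := by gcongr; linarith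
      _ = (1 - ν)⁻¹ := by field_simp
  refine lt_integral_Ioi_of_hasDerivAt
    (fun t (ht : x ≤ t) => hasDerivAt_incGammaLowerBound (hx.trans_le ht) (by linarith))
    (hweight.sub hf) tendsto_incGammaLowerBound_atTop hf fun t (ht : x < t) => ?_
  have hg : 0 < t ^ (ν - 1) * exp (-t) := by have := hx.trans ht; positivity
  have hw : 0 < (1 - ν) / (t + 1 - ν) ^ 2 := div_pos (by linarith) (by nlinarith)
  linarith [mul_pos hw hg]

end Lower

section Upper

variable {ν : ℝ}

noncomputable def incGammaUpperBound (ν t : ℝ) : ℝ :=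
  exp (-t) * (t ^ (ν - 1) + (ν - 1) * t ^ (ν - 2) + (ν - 1) * (ν - 2) * t ^ (ν - 3))

lemma hasDerivAt_incGammaUpperBound {t : ℝ} (ht : 0 < t) :
    HasDerivAt (incGammaUpperBound ν)
      ((ν - 1) * (ν - 2) * (ν - 3) * (t ^ (ν - 4) * exp (-t)) - t ^ (ν - 1) * exp (-t)) t := by
  have hpow (p : ℝ) : HasDerivAt (fun u => u ^ p) (p * t ^ (p - 1)) t :=
    hasDerivAt_rpow_const (Or.inl ht.ne')
  refine ((hasDerivAt_exp_neg t).mul (((hpow _).add ((hpow _).const_mul _)).add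
    ((hpow _).const_mul _))).congr_deriv ?_
  simp only [Pi.add_apply]
  rw [show ν - 1 - 1 = ν - 2 by ring, show ν - 2 - 1 = ν - 3 by ring,
    show ν - 3 - 1 = ν - 4 by ring]
  ring

lemma tendsto_incGammaUpperBound_atTop : Tendsto (incGammaUpperBound ν) atTop (𝓝 0) := by
  have := ((tendsto_rpow_mul_exp_neg_atTop_nhds_zero (ν - 1)).add
    ((tendsto_rpow_mul_exp_neg_atTop_nhds_zero (ν - 2)).const_mul (ν - 1))).add
    ((tendsto_rpow_mul_exp_neg_atTop_nhds_zero (ν - 3)).const_mul ((ν - 1) * (ν - 2)))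
  simp only [mul_zero, add_zero] at this
  exact this.congr fun t => by rw [incGammaUpperBound]; ring

lemma incGamma_lt_incGammaUpperBound (hν : ν < 1) {x : ℝ} (hx : 0 < x) :
    incGamma ν x < incGammaUpperBound ν x := by
  have hf := integrableOn_rpow_mul_exp_neg_Ioi (s := ν - 1) (by linarith) hx
  have hf₄ := integrableOn_rpow_mul_exp_neg_Ioi (s := ν - 4) (by linarith) hx
  refine integral_Ioi_lt_of_hasDerivAt
    (fun t (ht : x ≤ t) => hasDerivAt_incGammaUpperBound (hx.trans_le ht))
    ((hf₄.const_mul _).sub hf) tendsto_incGammaUpperBound_atTop hf fun t (ht : x < t) => ?_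
  have hg : 0 < t ^ (ν - 4) * exp (-t) := by have := hx.trans ht; positivity
  have hc : (ν - 1) * (ν - 2) * (ν - 3) < 0 :=
    mul_neg_of_pos_of_neg (mul_pos_of_neg_of_neg (by linarith) (by linarith)) (by linarith)
  linarith [mul_neg_of_neg_of_pos hc hg]

lemma incGammaUpperBound_eq {t : ℝ} (ht : 0 < t) :
    incGammaUpperBound ν t =
      t ^ (ν - 3) * exp (-t) * (t ^ 2 + (ν - 1) * t + (ν - 1) * (ν - 2)) := by
  rw [incGammaUpperBound, show ν - 1 = ν - 3 + 2 by ring, show ν - 2 = ν - 3 + 1 by ring,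
    rpow_add ht, rpow_add_one ht.ne', rpow_two]
  ring

end Upper

theorem incGamma_strict_bounds (ν x : ℝ) (hν : ν < 1) (hx : 0 < x) :
    x ^ ν * Real.exp (-x) / (x + 1 - ν) < incGamma ν x ∧
    incGamma ν x < x ^ (ν - 3) * Real.exp (-x) * (x ^ 2 + (ν - 1) * x + (ν - 1) * (ν - 2)) :=
  ⟨incGammaLowerBound_lt_incGamma hν hx,
    incGammaUpperBound_eq (ν := ν) hx ▸ incGamma_lt_incGammaUpperBound hν hx⟩
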